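/- arXiv:1912.12057 — 3 statements merged into one kernel-verified Lean document; each statement's English description precedes it below -/
import Mathlib

section
/- Let u ∈ ℝ³ be a unit vector, θ ∈ ℝ, and let ψ ∈ ℂ⁴ satisfy the absorbing boundary condition (u·α + θβ)ψ = √(1+θ²)·ψ, where α, β are the Dirac matrices. Then the current component u·j = ψ†(u·α)ψ satisfies u·j = √(1+θ²)·|ψ|² - θ·ψ†βψ ≥ (√(1+θ²) - |θ|)·|ψ|² ≥ 0, i.e., the probability current through the boundary is outward-pointing. -/
/-!
Rewriting the boundary condition as `(u·α)ψ = √(1+θ²)ψ - θβψ` and pairing with `ψ†` gives the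
identity for `u·j`. Since `β` is unitary, Cauchy–Schwarz bounds `|ψ†βψ|` by `|ψ|²`, and
`|θ| ≤ √(1+θ²)` makes the lower bound nonnegative.
-/

open Matrix

namespace Matrix

variable {n : Type*} [Fintype n]

theorem dotProduct_star_mulVec_eq_of_add_smul_mulVec_eq {R : Type*} [CommRing R] [Star R]
    {A B : Matrix n n R} {c s : R} {v : n → R} (h : (A + c • B) *ᵥ v = s • v) :
    star v ⬝ᵥ A *ᵥ v = s * (star v ⬝ᵥ v) - c * (star v ⬝ᵥ B *ᵥ v) := by
  have hA : A *ᵥ v = s • v - c • B *ᵥ v := by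
    rw [add_mulVec, smul_mulVec] at h
    rw [← h, add_sub_cancel_right]
  rw [hA, dotProduct_sub, dotProduct_smul, dotProduct_smul, smul_eq_mul, smul_eq_mul]

variable [DecidableEq n] {𝕜 : Type*} [RCLike 𝕜]

theorem star_mulVec_dotProduct_mulVec_of_conjTranspose_mul_self_eq_one {B : Matrix n n 𝕜}
    (hB : Bᴴ * B = 1) (v : n → 𝕜) : star (B *ᵥ v) ⬝ᵥ B *ᵥ v = star v ⬝ᵥ v := by
  rw [star_mulVec, ← dotProduct_mulVec, mulVec_mulVec, hB, one_mulVec]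

theorem norm_dotProduct_star_mulVec_le {B : Matrix n n 𝕜} (hB : Bᴴ * B = 1) (v : n → 𝕜) :
    ‖star v ⬝ᵥ B *ᵥ v‖ ≤ RCLike.re (star v ⬝ᵥ v) := by
  set x : EuclideanSpace 𝕜 n := WithLp.toLp 2 v
  set y : EuclideanSpace 𝕜 n := WithLp.toLp 2 (B *ᵥ v)
  have hxy : inner 𝕜 x y = star v ⬝ᵥ B *ᵥ v := dotProduct_comm _ _
  have hxx : inner 𝕜 x x = star v ⬝ᵥ v := dotProduct_comm _ _
  have hyy : inner 𝕜 y y = star v ⬝ᵥ v :=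
    (dotProduct_comm _ _).trans
      (star_mulVec_dotProduct_mulVec_of_conjTranspose_mul_self_eq_one hB v)
  have hnorm : ‖y‖ = ‖x‖ := by
    rw [norm_eq_sqrt_re_inner (𝕜 := 𝕜), norm_eq_sqrt_re_inner (𝕜 := 𝕜), hxx, hyy]
  calc ‖star v ⬝ᵥ B *ᵥ v‖ = ‖inner 𝕜 x y‖ := by rw [hxy]
    _ ≤ ‖x‖ * ‖y‖ := norm_inner_le_norm x y
    _ = RCLike.re (star v ⬝ᵥ v) := by rw [hnorm, ← hxx, inner_self_eq_norm_mul_norm]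

end Matrix

theorem stmt8_general (α : Fin 3 → Matrix (Fin 4) (Fin 4) ℂ) (β : Matrix (Fin 4) (Fin 4) ℂ)
    (hβherm : β.IsHermitian)
    (hβ2 : β * β = 1)
    (u : Fin 3 → ℝ) (θ : ℝ)
    (ψ : Fin 4 → ℂ)
    (hbc : (∑ i, (u i : ℂ) • α i + (θ : ℂ) • β).mulVec ψ
        = ((Real.sqrt (1 + θ ^ 2) : ℝ) : ℂ) • ψ) :
    (dotProduct (star ψ) ((∑ i, (u i : ℂ) • α i).mulVec ψ)).re
        = Real.sqrt (1 + θ ^ 2) * (dotProduct (star ψ) ψ).re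
          - θ * (dotProduct (star ψ) (β.mulVec ψ)).re ∧
    (Real.sqrt (1 + θ ^ 2) - |θ|) * (dotProduct (star ψ) ψ).re
        ≤ (dotProduct (star ψ) ((∑ i, (u i : ℂ) • α i).mulVec ψ)).re ∧
    0 ≤ (dotProduct (star ψ) ((∑ i, (u i : ℂ) • α i).mulVec ψ)).re := by
  have hcurrent := congrArg Complex.re (dotProduct_star_mulVec_eq_of_add_smul_mulVec_eq hbc)
  simp only [Complex.sub_re, Complex.re_ofReal_mul] at hcurrent
  have hβψ : |(star ψ ⬝ᵥ β *ᵥ ψ).re| ≤ (star ψ ⬝ᵥ ψ).re :=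
    (Complex.abs_re_le_norm _).trans (norm_dotProduct_star_mulVec_le (hβherm.eq.symm ▸ hβ2) ψ)
  have hθβψ : θ * (star ψ ⬝ᵥ β *ᵥ ψ).re ≤ |θ| * (star ψ ⬝ᵥ ψ).re :=
    (le_abs_self _).trans (abs_mul θ _ ▸ mul_le_mul_of_nonneg_left hβψ (abs_nonneg θ))
  have hθ : |θ| ≤ Real.sqrt (1 + θ ^ 2) := Real.abs_le_sqrt (by linarith)
  have hψ : 0 ≤ (star ψ ⬝ᵥ ψ).re := (abs_nonneg _).trans hβψ
  have hlower : (Real.sqrt (1 + θ ^ 2) - |θ|) * (star ψ ⬝ᵥ ψ).re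
      ≤ (star ψ ⬝ᵥ (∑ i, (u i : ℂ) • α i) *ᵥ ψ).re := by
    rw [hcurrent]; linarith
  exact ⟨hcurrent, hlower, (mul_nonneg (sub_nonneg.2 hθ) hψ).trans hlower⟩

/-- If `ψ ∈ ℂ⁴` satisfies the absorbing boundary condition `(u·α + θβ)ψ = √(1+θ²)ψ`
for Dirac matrices `α, β`, a unit vector `u ∈ ℝ³` and `θ ∈ ℝ`, then the current
component `u·j = ψ†(u·α)ψ` satisfies
`u·j = √(1+θ²)|ψ|² - θ ψ†βψ ≥ (√(1+θ²) - |θ|)|ψ|² ≥ 0`. -/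
theorem stmt8 (α : Fin 3 → Matrix (Fin 4) (Fin 4) ℂ) (β : Matrix (Fin 4) (Fin 4) ℂ)
    (hαherm : ∀ j, (α j).IsHermitian) (hβherm : β.IsHermitian)
    (hαα : ∀ j k, α j * α k + α k * α j = if j = k then (2 : ℂ) • 1 else 0)
    (hαβ : ∀ j, α j * β + β * α j = 0) (hβ2 : β * β = 1)
    (u : Fin 3 → ℝ) (hu : ∑ i, u i ^ 2 = 1) (θ : ℝ)
    (ψ : Fin 4 → ℂ)
    (hbc : (∑ i, (u i : ℂ) • α i + (θ : ℂ) • β).mulVec ψ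
        = ((Real.sqrt (1 + θ ^ 2) : ℝ) : ℂ) • ψ) :
    (dotProduct (star ψ) ((∑ i, (u i : ℂ) • α i).mulVec ψ)).re
        = Real.sqrt (1 + θ ^ 2) * (dotProduct (star ψ) ψ).re
          - θ * (dotProduct (star ψ) (β.mulVec ψ)).re ∧
    (Real.sqrt (1 + θ ^ 2) - |θ|) * (dotProduct (star ψ) ψ).re
        ≤ (dotProduct (star ψ) ((∑ i, (u i : ℂ) • α i).mulVec ψ)).re ∧
    0 ≤ (dotProduct (star ψ) ((∑ i, (u i : ℂ) • α i).mulVec ψ)).re :=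
  stmt8_general α β hβherm hβ2 u θ ψ hbc
end

section
/- Let M_f be the maximal multiplication operator by a measurable function f : S → ℂ on L²(S, μ). Then its adjoint (M_f)* equals the multiplication operator M_{f̄} by the complex conjugate of f, with the same domain D = {φ ∈ L²(S, μ) : fφ ∈ L²(S, μ)}. -/
/-!
If `fψ ∈ L²` then `f̄ψ ∈ L²` and `⟪f̄ψ, χ⟫ = ⟪ψ, fχ⟫`, so `ψ ∈ D(M_f*)` with `M_f* ψ = f̄ψ`.
Conversely, for `ψ ∈ D(M_f*)` test against the truncations `χₙ = f̄ · 1_{|f| ≤ n} ψ ∈ D(M_f)`: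
`‖χₙ‖² = ⟪ψ, fχₙ⟫ = ⟪M_f* ψ, χₙ⟫ ≤ ‖M_f* ψ‖ ‖χₙ‖`, so `‖f · 1_{|f| ≤ n} ψ‖ = ‖χₙ‖ ≤ ‖M_f* ψ‖`
for all `n`, and Fatou's lemma gives `fψ ∈ L²`.
-/

open MeasureTheory Filter Topology
open scoped ComplexConjugate ENNReal InnerProductSpace

namespace MeasureTheory

variable {S : Type*} [MeasurableSpace S] {μ : Measure S}

lemma memLp_of_tendsto_of_eLpNorm_le {E : Type*} [NormedAddCommGroup E] {p : ℝ≥0∞}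
    {g : ℕ → S → E} {h : S → E} {C : ℝ≥0∞} (hg : ∀ n, AEStronglyMeasurable (g n) μ)
    (hlim : ∀ᵐ s ∂μ, Tendsto (fun n => g n s) atTop (𝓝 (h s)))
    (hbound : ∀ n, eLpNorm (g n) p μ ≤ C) (hC : C ≠ ∞) : MemLp h p μ := by
  refine ⟨aestronglyMeasurable_of_tendsto_ae atTop hg hlim, ?_⟩
  calc eLpNorm h p μ ≤ atTop.liminf fun n => eLpNorm (g n) p μ :=
        Lp.eLpNorm_lim_le_liminf_eLpNorm hg h hlim
    _ ≤ C := liminf_le_of_le (by isBoundedDefault) fun b hb =>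
        hb.exists.elim fun n hn => hn.trans (hbound n)
    _ < ∞ := hC.lt_top

lemma MemLp.mul_indicator_of_norm_le {R : Type*} [NormedRing R] {p : ℝ≥0∞} {g ψ : S → R}
    {A : Set S} {c : ℝ} (hψ : MemLp ψ p μ) (hg : AEStronglyMeasurable g μ)
    (hA : MeasurableSet A) (hgA : ∀ s ∈ A, ‖g s‖ ≤ c) :
    MemLp (fun s => g s * A.indicator ψ s) p μ := by
  refine (hψ.indicator hA).of_le_mul (c := c) (hg.mul (hψ.1.indicator hA))
    (ae_of_all _ fun s => ?_)
  by_cases hs : s ∈ A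
  · simp only [Set.indicator_of_mem hs]
    exact (norm_mul_le _ _).trans (mul_le_mul_of_nonneg_right (hgA s hs) (norm_nonneg _))
  · simp [Set.indicator_of_notMem hs]

lemma L2.inner_eq_inner_of_ae_eq_mul {𝕜 : Type*} [RCLike 𝕜] {g : S → 𝕜} {u v w z : Lp 𝕜 2 μ}
    (hu : u =ᵐ[μ] fun s => g s * v s) (hw : w =ᵐ[μ] fun s => conj (g s) * z s) :
    ⟪z, u⟫_𝕜 = ⟪w, v⟫_𝕜 := by
  rw [L2.inner_def, L2.inner_def]
  refine integral_congr_ae ?_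
  filter_upwards [hu, hw] with s hus hws
  simp only [RCLike.inner_apply, hus, hws, map_mul, RCLike.conj_conj]
  ring

lemma memLp_conj_mul_of_memLp_mul {f ψ : S → ℂ} (hf : Measurable f)
    (hψ : AEStronglyMeasurable ψ μ) (hfψ : MemLp (fun s => f s * ψ s) 2 μ) :
    MemLp (fun s => conj (f s) * ψ s) 2 μ :=
  hfψ.of_le ((continuous_star.measurable.comp hf).aestronglyMeasurable.mul hψ)
    (ae_of_all _ fun s => by simp)

section MultiplicationOperator

variable {f : S → ℂ} {T : Lp ℂ 2 μ →ₗ.[ℂ] Lp ℂ 2 μ}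

lemma exists_inner_eq_inner_of_memLp_mul
    (hT : ∀ φ : T.domain, (T φ : S → ℂ) =ᵐ[μ] fun s => f s * (φ : Lp ℂ 2 μ) s)
    (hf : Measurable f) {ψ : Lp ℂ 2 μ} (hψ : MemLp (fun s => f s * ψ s) 2 μ) :
    ∃ w : Lp ℂ 2 μ, (w =ᵐ[μ] fun s => conj (f s) * ψ s) ∧
      ∀ χ : T.domain, ⟪w, (χ : Lp ℂ 2 μ)⟫_ℂ = ⟪ψ, T χ⟫_ℂ := by
  have hmem := memLp_conj_mul_of_memLp_mul hf (Lp.aestronglyMeasurable ψ) hψ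
  exact ⟨hmem.toLp _, hmem.coeFn_toLp,
    fun χ => (L2.inner_eq_inner_of_ae_eq_mul (hT χ) hmem.coeFn_toLp).symm⟩

lemma eLpNorm_mul_indicator_le_norm_adjoint
    (hTdom : ∀ φ : Lp ℂ 2 μ, φ ∈ T.domain ↔ MemLp (fun s => f s * φ s) 2 μ)
    (hT : ∀ φ : T.domain, (T φ : S → ℂ) =ᵐ[μ] fun s => f s * (φ : Lp ℂ 2 μ) s)
    (hdense : Dense (T.domain : Set (Lp ℂ 2 μ))) (hf : Measurable f) (ψ : T.adjoint.domain)
    (c : ℝ) :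
    eLpNorm (fun s => f s * {s | ‖f s‖ ≤ c}.indicator ψ s) 2 μ ≤
      ENNReal.ofReal ‖T.adjoint ψ‖ := by
  set A := {s | ‖f s‖ ≤ c}
  have hA : MeasurableSet A := measurableSet_le hf.norm measurable_const
  have hconjf : Measurable fun s => conj (f s) := continuous_star.measurable.comp hf
  have hχ : MemLp (fun s => conj (f s) * A.indicator ψ s) 2 μ :=
    (Lp.memLp (ψ : Lp ℂ 2 μ)).mul_indicator_of_norm_le hconjf.aestronglyMeasurable hA
      fun s hs => by rw [RCLike.norm_conj]; exact hs
  set χ := hχ.toLp _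
  have hχae : χ =ᵐ[μ] fun s => conj (f s) * A.indicator ψ s := hχ.coeFn_toLp
  have hfχ : MemLp (fun s => f s * χ s) 2 μ := by
    refine ((Lp.memLp (ψ : Lp ℂ 2 μ)).mul_indicator_of_norm_le (c := c * c)
      (g := fun s => f s * conj (f s)) (hf.mul hconjf).aestronglyMeasurable hA
      fun s hs => ?_).ae_eq ?_
    · simpa [norm_mul] using mul_self_le_mul_self (norm_nonneg _) (hs : ‖f s‖ ≤ c)
    · filter_upwards [hχae] with s hs
      rw [hs, mul_assoc]
  set χT : T.domain := ⟨χ, (hTdom χ).2 hfχ⟩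
  have hself : ⟪χ, χ⟫_ℂ = ⟪(ψ : Lp ℂ 2 μ), T χT⟫_ℂ := by
    rw [L2.inner_def, L2.inner_def]
    refine integral_congr_ae ?_
    filter_upwards [hT χT, hχae] with s hTs hs
    rw [hTs]
    change ⟪χ s, χ s⟫_ℂ = ⟪(ψ : Lp ℂ 2 μ) s, f s * χ s⟫_ℂ
    by_cases h : s ∈ A
    · simp only [hs, Set.indicator_of_mem h, RCLike.inner_apply, map_mul, RCLike.conj_conj]
      ring
    · simp [hs, Set.indicator_of_notMem h]
  have hbound : ‖χ‖ ≤ ‖T.adjoint ψ‖ := by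
    have hsq : ‖χ‖ * ‖χ‖ ≤ ‖T.adjoint ψ‖ * ‖χ‖ := by
      calc ‖χ‖ * ‖χ‖ = ‖⟪χ, χ⟫_ℂ‖ := by rw [inner_self_eq_norm_sq_to_K]; simp [sq]
        _ = ‖⟪T.adjoint ψ, χ⟫_ℂ‖ := by
          rw [hself, LinearPMap.adjoint_isFormalAdjoint hdense ψ χT]
        _ ≤ ‖T.adjoint ψ‖ * ‖χ‖ := norm_inner_le_norm _ _
    rcases (norm_nonneg χ).eq_or_lt with h0 | hpos
    · rw [← h0]; exact norm_nonneg _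
    · exact le_of_mul_le_mul_right hsq hpos
  calc eLpNorm (fun s => f s * A.indicator ψ s) 2 μ = eLpNorm χ 2 μ :=
        eLpNorm_congr_norm_ae (by filter_upwards [hχae] with s hs; simp [hs])
    _ = ENNReal.ofReal ‖χ‖ := by rw [← Lp.enorm_def, ofReal_norm]
    _ ≤ ENNReal.ofReal ‖T.adjoint ψ‖ := ENNReal.ofReal_le_ofReal hbound

lemma memLp_mul_of_mem_adjoint_domain
    (hTdom : ∀ φ : Lp ℂ 2 μ, φ ∈ T.domain ↔ MemLp (fun s => f s * φ s) 2 μ)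
    (hT : ∀ φ : T.domain, (T φ : S → ℂ) =ᵐ[μ] fun s => f s * (φ : Lp ℂ 2 μ) s)
    (hdense : Dense (T.domain : Set (Lp ℂ 2 μ))) (hf : Measurable f) (ψ : T.adjoint.domain) :
    MemLp (fun s => f s * (ψ : Lp ℂ 2 μ) s) 2 μ := by
  set A : ℕ → Set S := fun n => {s | ‖f s‖ ≤ n}
  have hA (n : ℕ) : MeasurableSet (A n) := measurableSet_le hf.norm measurable_const
  have hlim (s : S) : Tendsto (fun n => f s * (A n).indicator (ψ : Lp ℂ 2 μ) s) atTop
      (𝓝 (f s * (ψ : Lp ℂ 2 μ) s)) := by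
    obtain ⟨N, hN⟩ := exists_nat_ge ‖f s‖
    refine tendsto_atTop_of_eventually_const (i₀ := N) fun n hn => ?_
    have hs : s ∈ A n := hN.trans (Nat.cast_le.2 hn)
    rw [Set.indicator_of_mem hs]
  exact memLp_of_tendsto_of_eLpNorm_le
    (fun n => hf.aestronglyMeasurable.mul ((Lp.aestronglyMeasurable _).indicator (hA n)))
    (ae_of_all _ hlim) (fun n => eLpNorm_mul_indicator_le_norm_adjoint hTdom hT hdense hf ψ n)
    ENNReal.ofReal_ne_top

end MultiplicationOperator

end MeasureTheory

theorem stmt11_general {S : Type*} [MeasurableSpace S] (μ : Measure S)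
    (f : S → ℂ) (hf : Measurable f)
    (T : Lp ℂ 2 μ →ₗ.[ℂ] Lp ℂ 2 μ)
    (hTdom : ∀ φ : Lp ℂ 2 μ, φ ∈ T.domain ↔ MemLp (fun s => f s * φ s) 2 μ)
    (hT : ∀ φ : T.domain, (T φ : S → ℂ) =ᵐ[μ] fun s => f s * (φ : Lp ℂ 2 μ) s)
    (hdense : Dense (T.domain : Set (Lp ℂ 2 μ))) :
    (∀ ψ : Lp ℂ 2 μ, ψ ∈ T.adjoint.domain ↔ ψ ∈ T.domain) ∧
    (∀ ψ : T.adjoint.domain,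
      (T.adjoint ψ : S → ℂ) =ᵐ[μ]
        fun s => (starRingEnd ℂ) (f s) * (ψ : Lp ℂ 2 μ) s) := by
  refine ⟨fun ψ => ⟨fun hψ => ?_, fun hψ => ?_⟩, fun ψ => ?_⟩
  · exact (hTdom ψ).2 (memLp_mul_of_mem_adjoint_domain hTdom hT hdense hf ⟨ψ, hψ⟩)
  · obtain ⟨w, -, hw⟩ := exists_inner_eq_inner_of_memLp_mul hT hf ((hTdom ψ).1 hψ)
    exact LinearPMap.mem_adjoint_domain_of_exists ψ ⟨w, hw⟩
  · obtain ⟨w, hw_ae, hw⟩ := exists_inner_eq_inner_of_memLp_mul hT hf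
      (memLp_mul_of_mem_adjoint_domain hTdom hT hdense hf ψ)
    rw [LinearPMap.adjoint_apply_eq hdense ψ hw]
    exact hw_ae

/-- The adjoint of the maximal multiplication operator `M_f` by a measurable
`f : S → ℂ` on `L²(S,μ)` is the multiplication operator by the complex conjugate `f̄`,
with the same (maximal) domain `{φ ∈ L² : fφ ∈ L²}`. -/
theorem stmt11 {S : Type*} [MeasurableSpace S] (μ : Measure S) [SigmaFinite μ]
    (f : S → ℂ) (hf : Measurable f)
    (T : Lp ℂ 2 μ →ₗ.[ℂ] Lp ℂ 2 μ)
    (hTdom : ∀ φ : Lp ℂ 2 μ, φ ∈ T.domain ↔ MemLp (fun s => f s * φ s) 2 μ)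
    (hT : ∀ φ : T.domain, (T φ : S → ℂ) =ᵐ[μ] fun s => f s * (φ : Lp ℂ 2 μ) s)
    (hdense : Dense (T.domain : Set (Lp ℂ 2 μ))) :
    (∀ ψ : Lp ℂ 2 μ, ψ ∈ T.adjoint.domain ↔ ψ ∈ T.domain) ∧
    (∀ ψ : T.adjoint.domain,
      (T.adjoint ψ : S → ℂ) =ᵐ[μ]
        fun s => (starRingEnd ℂ) (f s) * (ψ : Lp ℂ 2 μ) s) :=
  stmt11_general μ f hf T hTdom hT hdense
end

section
/- Suppose for every a > 0 there exists b > 0 such that ‖φ‖_∞ ≤ a‖Δφ‖₂ + b‖φ‖₂ for all φ ∈ C₀^∞(ℝ³). Let V = V₁ + V₂ with V₁ ∈ L²(ℝ³) and V₂ ∈ L^∞(ℝ³). Then for every ε > 0 there exists C > 0 such that ‖Vφ‖₂ ≤ ε‖Δφ‖₂ + C‖φ‖₂ for all φ ∈ C₀^∞(ℝ³); i.e., V is Laplacian-bounded with arbitrarily small relative bound. -/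
open MeasureTheory

/-- The Laplacian `Δφ = Σᵢ ∂²φ/∂xᵢ²` of a function on `ℝ³`. -/
noncomputable def laplacian3 (φ : EuclideanSpace ℝ (Fin 3) → ℂ) :
    EuclideanSpace ℝ (Fin 3) → ℂ := fun x =>
  ∑ i : Fin 3,
    iteratedFDeriv ℝ 2 φ x ![EuclideanSpace.single i (1 : ℝ), EuclideanSpace.single i 1]

/-- Suppose that for every `a > 0` there is `b > 0` with
`‖φ‖_∞ ≤ a‖Δφ‖₂ + b‖φ‖₂` for all `φ ∈ C₀^∞(ℝ³)`.  If `V = V₁ + V₂` with `V₁ ∈ L²(ℝ³)`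
and `V₂ ∈ L^∞(ℝ³)`, then for every `ε > 0` there is `C > 0` with
`‖Vφ‖₂ ≤ ε‖Δφ‖₂ + C‖φ‖₂` for all `φ ∈ C₀^∞(ℝ³)`: `V` is Laplacian-bounded with
arbitrarily small relative bound. -/
theorem stmt18
    (hSobolev : ∀ a : ℝ, 0 < a → ∃ b : ℝ, 0 < b ∧
      ∀ φ : EuclideanSpace ℝ (Fin 3) → ℂ, ContDiff ℝ (⊤ : ℕ∞) φ → HasCompactSupport φ →
        eLpNorm φ ⊤ volume ≤
          ENNReal.ofReal a * eLpNorm (laplacian3 φ) 2 volume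
            + ENNReal.ofReal b * eLpNorm φ 2 volume)
    (V₁ V₂ : EuclideanSpace ℝ (Fin 3) → ℂ)
    (hV₁ : MemLp V₁ 2 volume) (hV₂ : MemLp V₂ ⊤ volume) :
    ∀ ε : ℝ, 0 < ε → ∃ C : ℝ, 0 < C ∧
      ∀ φ : EuclideanSpace ℝ (Fin 3) → ℂ, ContDiff ℝ (⊤ : ℕ∞) φ → HasCompactSupport φ →
        eLpNorm (fun x => (V₁ x + V₂ x) * φ x) 2 volume ≤
          ENNReal.ofReal ε * eLpNorm (laplacian3 φ) 2 volume
            + ENNReal.ofReal C * eLpNorm φ 2 volume := by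
  intro ε hε
  set M₁ : ENNReal := eLpNorm V₁ 2 volume with hM₁
  set M₂ : ENNReal := eLpNorm V₂ ⊤ volume with hM₂
  have hM₁top : M₁ ≠ ⊤ := hV₁.2.ne
  have hM₂top : M₂ ≠ ⊤ := hV₂.2.ne
  set a : ℝ := ε / (M₁.toReal + 1) with ha_def
  have hM₁pos : (0:ℝ) < M₁.toReal + 1 := by positivity
  have ha : 0 < a := div_pos hε hM₁pos
  obtain ⟨b, hb, hSb⟩ := hSobolev a ha
  refine ⟨(M₁.toReal + 1) * b + M₂.toReal + 1, by positivity, ?_⟩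
  intro φ hφ hφc
  have hφm : AEStronglyMeasurable φ volume := hφ.continuous.aestronglyMeasurable
  have hmul : ∀ᵐ x ∂(volume : Measure (EuclideanSpace ℝ (Fin 3))),
      ∀ f : EuclideanSpace ℝ (Fin 3) → ℂ, ‖f x * φ x‖₊ ≤ ‖f x‖₊ * ‖φ x‖₊ := by
    filter_upwards with x f; simp [nnnorm_mul]
  have h1 : eLpNorm (fun x => V₁ x * φ x) 2 volume ≤ M₁ * eLpNorm φ ⊤ volume :=
    by simpa only [ENNReal.coe_one, one_mul] using (eLpNorm_le_eLpNorm_mul_eLpNorm_top 2 hV₁.1 φ (· * ·) 1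
      (hmul.mono fun x h => by simpa only [one_mul] using h V₁))
  have h2 : eLpNorm (fun x => V₂ x * φ x) 2 volume ≤ M₂ * eLpNorm φ 2 volume :=
    by simpa only [ENNReal.coe_one, one_mul] using (eLpNorm_le_eLpNorm_top_mul_eLpNorm 2 V₂ hφm (· * ·) 1
      (hmul.mono fun x h => by simpa only [one_mul] using h V₂))
  have hadd : eLpNorm (fun x => (V₁ x + V₂ x) * φ x) 2 volume ≤
      eLpNorm (fun x => V₁ x * φ x) 2 volume + eLpNorm (fun x => V₂ x * φ x) 2 volume := by
    have := eLpNorm_add_le (μ := (volume : Measure (EuclideanSpace ℝ (Fin 3))))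
      (f := fun x => V₁ x * φ x) (g := fun x => V₂ x * φ x)
      (hV₁.1.mul hφm) (hV₂.1.mul hφm) (p := 2) (by norm_num)
    refine le_trans (le_of_eq ?_) this; congr 1; ext x; simp [add_mul]
  have hsob := hSb φ hφ hφc
  -- bound M₁ * (a-term)
  have hM₁le : M₁ ≤ ENNReal.ofReal (M₁.toReal + 1) := by
    conv_lhs => rw [← ENNReal.ofReal_toReal hM₁top]
    exact ENNReal.ofReal_le_ofReal (by linarith)
  have hεeq : ENNReal.ofReal (M₁.toReal + 1) * ENNReal.ofReal a = ENNReal.ofReal ε := by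
    rw [← ENNReal.ofReal_mul (le_of_lt hM₁pos), ha_def,
      mul_div_cancel₀ _ (ne_of_gt hM₁pos)]
  have hM₂le : M₂ ≤ ENNReal.ofReal (M₂.toReal + 1) := by
    conv_lhs => rw [← ENNReal.ofReal_toReal hM₂top]
    exact ENNReal.ofReal_le_ofReal (by linarith)
  calc eLpNorm (fun x => (V₁ x + V₂ x) * φ x) 2 volume
      ≤ eLpNorm (fun x => V₁ x * φ x) 2 volume + eLpNorm (fun x => V₂ x * φ x) 2 volume :=
        hadd
    _ ≤ M₁ * eLpNorm φ ⊤ volume + M₂ * eLpNorm φ 2 volume := add_le_add h1 h2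
    _ ≤ ENNReal.ofReal (M₁.toReal + 1) *
          (ENNReal.ofReal a * eLpNorm (laplacian3 φ) 2 volume
            + ENNReal.ofReal b * eLpNorm φ 2 volume)
          + ENNReal.ofReal (M₂.toReal + 1) * eLpNorm φ 2 volume := by
        gcongr
    _ = ENNReal.ofReal ε * eLpNorm (laplacian3 φ) 2 volume
          + (ENNReal.ofReal (M₁.toReal + 1) * ENNReal.ofReal b
            + ENNReal.ofReal (M₂.toReal + 1)) * eLpNorm φ 2 volume := by
        rw [mul_add, ← mul_assoc, ← mul_assoc, hεeq, add_assoc, ← add_mul]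
    _ = ENNReal.ofReal ε * eLpNorm (laplacian3 φ) 2 volume
          + ENNReal.ofReal ((M₁.toReal + 1) * b + M₂.toReal + 1) * eLpNorm φ 2 volume := by
        rw [← ENNReal.ofReal_mul (le_of_lt hM₁pos), ← ENNReal.ofReal_add (by positivity)
          (by positivity), add_assoc]
end
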